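/- A finite word w is rich if and only if each factor of w is uniquely determined by its longest palindromic prefix and its longest palindromic suffix; that is, w is rich if and only if any two factors u and v of w having the same longest palindromic prefix and the same longest palindromic suffix are equal. -/

import Mathlib

/-- The finset of (distinct) palindromic factors of a finite word `w`,
including the empty word. -/
def palFactors {A : Type*} [DecidableEq A] (w : List A) : Finset (List A) :=
  ((w.inits.flatMap List.tails).filter (fun u => u.reverse = u)).toFinset

/-- A finite word `w` is rich if it has exactly `|w| + 1` distinct palindromic factors. -/
def Rich {A : Type*} [DecidableEq A] (w : List A) : Prop :=
  (palFactors w).card = w.length + 1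

/-- `p` is the longest palindromic prefix of `u`. -/
def LongestPalPrefix {A : Type*} (p u : List A) : Prop :=
  p <+: u ∧ p.reverse = p ∧ ∀ p' : List A, p' <+: u → p'.reverse = p' → p'.length ≤ p.length

/-- `q` is the longest palindromic suffix of `u`. -/
def LongestPalSuffix {A : Type*} (q u : List A) : Prop :=
  q <:+ u ∧ q.reverse = q ∧ ∀ q' : List A, q' <:+ u → q'.reverse = q' → q'.length ≤ q.length


/-!
Write `lps z` and `lpp z` for the longest palindromic suffix and prefix of `z`. A palindromic
factor first occurs as the `lps` of some prefix, so `w` is rich iff `lps` is injective on the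
prefixes of `w`; in particular, in a factor `z` of a rich word, `lps z` and `lpp z` occur only
once.

(→) Let `P` be the prefix of `w` ending with the first occurrence of a factor `z`. Either
`lps P = lps z`, and by unioccurrence `P` also ends with the first occurrence of `lps z`; or `z`
is a proper suffix of the palindrome `lps P`, so `z.reverse` occurs earlier, and the same
argument applied to `z.reverse` shows that it ends at the first occurrence of `lpp z`. Two
factors with equal `lpp` and `lps` ending at the same first occurrence are nested, hence equal
by unioccurrence; in the crossed case each of the two first occurrences would end strictly
before the other.

(←) If `lps P₁ = lps P₂ = s` for prefixes `P₁ ⊊ P₂`, take a suffix `r` of `P₂` beginning with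
`s` in which `s` occurs at no later position except as a suffix. Then `lpp r = lps r = s` but
`r ≠ s`.
-/

open List

section Words

variable {A : Type*}

namespace List

theorem nodup_inits (l : List A) : l.inits.Nodup := by
  induction l with
  | nil => simp
  | cons a l ih =>
    rw [inits_cons, nodup_cons]
    exact ⟨by simp, ih.map cons_injective⟩

theorem isPrefix_of_isSuffix_of_reverse_eq {s t : List A} (h : s <:+ t) (hs : s.reverse = s)
    (ht : t.reverse = t) : s <+: t := by
  rwa [← reverse_prefix, hs, ht] at h

theorem isSuffix_of_isPrefix_of_reverse_eq {s t : List A} (h : s <+: t) (hs : s.reverse = s)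
    (ht : t.reverse = t) : s <:+ t := by
  rwa [← reverse_suffix, hs, ht] at h

theorem IsPrefix.isPrefix_dropLast {a b : List A} (h : a <+: b) (hne : a ≠ b) :
    a <+: b.dropLast := by
  have hlt : a.length < b.length := h.length_le.lt_of_ne (hne ∘ h.eq_of_length)
  exact prefix_of_prefix_length_le h b.dropLast_prefix (by rw [length_dropLast]; omega)

theorem isInfix_dropLast_of_isPrefix {y x z : List A} (hyx : y <+: x) (hne : y ≠ x)
    (hxz : x <:+ z) : y <:+: z.dropLast := by
  obtain ⟨b, rfl⟩ := hyx
  obtain ⟨a, rfl⟩ := hxz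
  have hb : b ≠ [] := by rintro rfl; simp at hne
  exact ⟨a, b.dropLast, by rw [← append_assoc, dropLast_append_of_ne_nil hb]⟩

theorem isSuffix_of_isInfix_of_not_isInfix_dropLast {x z : List A} (h : x <:+: z)
    (h' : ¬ x <:+: z.dropLast) : x <:+ z := by
  obtain ⟨a, b, rfl⟩ := h
  by_cases hb : b = []
  · exact ⟨a, by simp [hb]⟩
  · exact absurd ⟨a, b.dropLast, (dropLast_append_of_ne_nil hb).symm⟩ h'

variable [DecidableEq A]

def lps : List A → List A
  | [] => []
  | a :: z => if (a :: z).reverse = a :: z then a :: z else lps z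

def lpp (z : List A) : List A := z.reverse.lps

theorem lps_suffix (z : List A) : z.lps <:+ z := by
  induction z with
  | nil => exact suffix_refl []
  | cons a z ih =>
    rw [lps]
    split
    · exact suffix_refl _
    · exact ih.trans (suffix_cons a z)

theorem reverse_lps (z : List A) : z.lps.reverse = z.lps := by
  induction z with
  | nil => rfl
  | cons a z ih =>
    rw [lps]
    split <;> assumption

theorem length_le_length_lps {s z : List A} (hs : s <:+ z) (hpal : s.reverse = s) :
    s.length ≤ z.lps.length := by
  induction z with
  | nil => exact hs.length_le
  | cons a z ih =>
    rw [lps]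
    split
    · exact hs.length_le
    · rcases suffix_cons_iff.1 hs with rfl | hs
      · contradiction
      · exact ih hs

theorem lps_ne_nil {z : List A} (hz : z ≠ []) : z.lps ≠ [] := by
  have hlast : [z.getLast hz] <:+ z := ⟨z.dropLast, dropLast_append_getLast hz⟩
  exact length_pos_iff.1 (length_le_length_lps hlast rfl)

theorem longestPalSuffix_iff_eq_lps {q z : List A} : LongestPalSuffix q z ↔ q = z.lps := by
  constructor
  · rintro ⟨hq, hpal, hmax⟩
    have hle : q.length ≤ z.lps.length := length_le_length_lps hq hpal
    exact (suffix_of_suffix_length_le hq z.lps_suffix hle).eq_of_length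
      (hle.antisymm (hmax _ z.lps_suffix z.reverse_lps))
  · rintro rfl
    exact ⟨z.lps_suffix, z.reverse_lps, fun _ => length_le_length_lps⟩

theorem lps_eq_self {z : List A} (h : z.reverse = z) : z.lps = z :=
  z.lps_suffix.eq_of_length_le (length_le_length_lps (suffix_refl z) h)

theorem lps_eq_lps_of_isSuffix {z P : List A} (hz : P.lps <:+ z) (hP : z <:+ P) :
    z.lps = P.lps :=
  (longestPalSuffix_iff_eq_lps.1
    ⟨hz, P.reverse_lps, fun _ hq hpal => length_le_length_lps (hq.trans hP) hpal⟩).symm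

theorem lps_reverse (z : List A) : z.reverse.lps = z.lpp := rfl

theorem lpp_reverse (z : List A) : z.reverse.lpp = z.lps := by
  rw [lpp, reverse_reverse]

theorem reverse_lpp (z : List A) : z.lpp.reverse = z.lpp := reverse_lps _

theorem lpp_prefix (z : List A) : z.lpp <+: z := by
  rw [← reverse_suffix, reverse_lpp]
  exact lps_suffix _

theorem length_le_length_lpp {s z : List A} (hs : s <+: z) (hpal : s.reverse = s) :
    s.length ≤ z.lpp.length :=
  length_le_length_lps (by rwa [← reverse_suffix, hpal] at hs) hpal

theorem longestPalPrefix_iff_eq_lpp {p z : List A} : LongestPalPrefix p z ↔ p = z.lpp := by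
  constructor
  · rintro ⟨hp, hpal, hmax⟩
    have hle : p.length ≤ z.lpp.length := length_le_length_lpp hp hpal
    exact (prefix_of_prefix_length_le hp z.lpp_prefix hle).eq_of_length
      (hle.antisymm (hmax _ z.lpp_prefix z.reverse_lpp))
  · rintro rfl
    exact ⟨z.lpp_prefix, z.reverse_lpp, fun _ => length_le_length_lpp⟩

theorem lpp_ne_nil {z : List A} (hz : z ≠ []) : z.lpp ≠ [] :=
  lps_ne_nil (reverse_ne_nil_iff.2 hz)

theorem lpp_eq_self {z : List A} (h : z.reverse = z) : z.lpp = z := by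
  rw [lpp, h, lps_eq_self h]

theorem lpp_ne_self {z : List A} (h : z.reverse ≠ z) : z.lpp ≠ z :=
  fun hz => h (hz ▸ z.reverse_lpp)

end List

/-- `P` is the prefix of `w` that ends with the first occurrence of `x` in `w`. -/
structure IsFirstOccurrence (x w P : List A) : Prop where
  isPrefix : P <+: w
  isSuffix : x <:+ P
  not_isInfix_dropLast : ¬ x <:+: P.dropLast

theorem exists_isFirstOccurrence {x w : List A} (hx : x ≠ []) (h : x <:+: w) :
    ∃ P, IsFirstOccurrence x w P := by
  by_cases h' : x <:+: w.dropLast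
  · have hw : 0 < w.length := length_pos_iff.2 (by rintro rfl; exact hx (eq_nil_of_infix_nil h))
    have : w.dropLast.length < w.length := by rw [length_dropLast]; omega
    obtain ⟨P, hP⟩ := exists_isFirstOccurrence hx h'
    exact ⟨P, ⟨hP.isPrefix.trans w.dropLast_prefix, hP.isSuffix, hP.not_isInfix_dropLast⟩⟩
  · exact ⟨w, ⟨prefix_refl w, isSuffix_of_isInfix_of_not_isInfix_dropLast h h', h'⟩⟩
termination_by w.length

namespace IsFirstOccurrence

variable {x w P : List A}

theorem ne_nil (hP : IsFirstOccurrence x w P) : P ≠ [] := by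
  rintro rfl
  exact hP.not_isInfix_dropLast hP.isSuffix.isInfix

theorem isPrefix_of_isInfix {Q : List A} (hP : IsFirstOccurrence x w P) (hQ : Q <+: w)
    (hx : x <:+: Q) : P <+: Q := by
  rcases prefix_or_prefix_of_prefix hP.isPrefix hQ with h | h
  · exact h
  · by_cases hQP : Q = P
    · exact hQP ▸ prefix_refl Q
    · exact absurd (hx.trans (h.isPrefix_dropLast hQP).isInfix) hP.not_isInfix_dropLast

theorem unique {Q : List A} (hP : IsFirstOccurrence x w P) (hQ : IsFirstOccurrence x w Q) :
    P = Q := by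
  have hPQ := hP.isPrefix_of_isInfix hQ.isPrefix hQ.isSuffix.isInfix
  have hQP := hQ.isPrefix_of_isInfix hP.isPrefix hP.isSuffix.isInfix
  exact hPQ.eq_of_length (hPQ.length_le.antisymm hQP.length_le)

theorem length_lt_of_isPrefix {y Q : List A} (hP : IsFirstOccurrence x w P) (hQ : Q <+: w)
    (hxy : x <+: y) (hne : x ≠ y) (hyQ : y <:+ Q) : P.length < Q.length := by
  have := (hP.isPrefix_of_isInfix (Q.dropLast_prefix.trans hQ)
    (isInfix_dropLast_of_isPrefix hxy hne hyQ)).length_le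
  rw [length_dropLast] at this
  have := length_pos_iff.2 hP.ne_nil
  omega

variable [DecidableEq A]

theorem lps_eq (hP : IsFirstOccurrence x w P) (hx : x.reverse = x) : P.lps = x := by
  have hle : x.length ≤ P.lps.length := length_le_length_lps hP.isSuffix hx
  have hxs : x <:+ P.lps := suffix_of_suffix_length_le hP.isSuffix P.lps_suffix hle
  by_contra hne
  exact hP.not_isInfix_dropLast (isInfix_dropLast_of_isPrefix
    (isPrefix_of_isSuffix_of_reverse_eq hxs hx P.reverse_lps) (Ne.symm hne) P.lps_suffix)

end IsFirstOccurrence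

section Rich

variable [DecidableEq A] {w : List A}

theorem mem_palFactors {x : List A} : x ∈ palFactors w ↔ x <:+: w ∧ x.reverse = x := by
  simp only [palFactors, mem_toFinset, mem_filter, mem_flatMap, mem_inits, mem_tails,
    decide_eq_true_eq, infix_iff_suffix_prefix]
  constructor
  · rintro ⟨⟨t, ht, hx⟩, hpal⟩
    exact ⟨⟨t, hx, ht⟩, hpal⟩
  · rintro ⟨⟨t, hx, ht⟩, hpal⟩
    exact ⟨⟨t, ht, hx⟩, hpal⟩

theorem palFactors_eq_image_lps (w : List A) : palFactors w = w.inits.toFinset.image lps := by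
  ext x
  simp only [mem_palFactors, Finset.mem_image, mem_toFinset, mem_inits]
  constructor
  · rintro ⟨hx, hpal⟩
    rcases eq_or_ne x [] with rfl | hne
    · exact ⟨[], nil_prefix, rfl⟩
    · obtain ⟨P, hP⟩ := exists_isFirstOccurrence hne hx
      exact ⟨P, hP.isPrefix, hP.lps_eq hpal⟩
  · rintro ⟨P, hP, rfl⟩
    exact ⟨P.lps_suffix.isInfix.trans hP.isInfix, P.reverse_lps⟩

theorem rich_iff_injOn_lps : Rich w ↔ Set.InjOn lps {P | P <+: w} := by
  rw [Rich, palFactors_eq_image_lps, ← w.length_inits, ← toFinset_card_of_nodup w.nodup_inits,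
    Finset.card_image_iff, coe_toFinset]
  simp only [mem_inits]

theorem Rich.isPrefix (hw : Rich w) {P : List A} (hP : P <+: w) : Rich P :=
  rich_iff_injOn_lps.2 <| (rich_iff_injOn_lps.1 hw).mono fun _ hQ => hQ.trans hP

theorem palFactors_reverse (w : List A) : palFactors w.reverse = palFactors w := by
  ext x
  simp only [mem_palFactors, and_congr_left_iff]
  intro hpal
  rw [← reverse_infix, reverse_reverse, hpal]

theorem Rich.reverse (hw : Rich w) : Rich w.reverse := by
  rwa [Rich, palFactors_reverse, length_reverse]

theorem Rich.isInfix (hw : Rich w) {u : List A} (hu : u <:+: w) : Rich u := by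
  obtain ⟨t, hut, htw⟩ := infix_iff_suffix_prefix.1 hu
  simpa using ((hw.isPrefix htw).reverse.isPrefix (reverse_prefix.2 hut)).reverse

theorem Rich.lps_not_isInfix_dropLast (hw : Rich w) (hne : w ≠ []) :
    ¬ w.lps <:+: w.dropLast := by
  intro h
  obtain ⟨P, hP⟩ := exists_isFirstOccurrence (lps_ne_nil hne) h
  have hPw : P = w := rich_iff_injOn_lps.1 hw (hP.isPrefix.trans w.dropLast_prefix)
    (prefix_refl w) (hP.lps_eq w.reverse_lps)
  have hlen := hP.isPrefix.length_le
  rw [hPw, length_dropLast] at hlen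
  have := length_pos_iff.2 hne
  omega

theorem Rich.lpp_not_isInfix_tail (hw : Rich w) (hne : w ≠ []) : ¬ w.lpp <:+: w.tail := by
  intro h
  apply hw.reverse.lps_not_isInfix_dropLast (reverse_ne_nil_iff.2 hne)
  rw [lps_reverse, dropLast_reverse, ← reverse_lpp]
  exact reverse_infix.2 h

theorem Rich.eq_of_isInfix {u v : List A} (hv : Rich v) (huv : u <:+: v)
    (hp : u.lpp = v.lpp) (hq : u.lps = v.lps) : u = v := by
  obtain ⟨a, b, rfl⟩ := huv
  by_cases ha : a = []
  · by_cases hb : b = []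
    · simp [ha, hb]
    · refine absurd ?_ (hv.lps_not_isInfix_dropLast (by simp [hb]))
      rw [← hq, dropLast_append_of_ne_nil hb]
      exact u.lps_suffix.isInfix.trans (infix_append _ _ _)
  · refine absurd ?_ (hv.lpp_not_isInfix_tail (by simp [ha]))
    obtain ⟨c, a, rfl⟩ := exists_cons_of_ne_nil ha
    rw [← hp]
    exact u.lpp_prefix.isInfix.trans (infix_append _ _ _)

end Rich

section Forward

variable [DecidableEq A] {w : List A}

theorem Rich.isFirstOccurrence_lps_or_reverse_isInfix (hw : Rich w) {z P : List A}
    (hP : IsFirstOccurrence z w P) :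
    IsFirstOccurrence z.lps w P ∨ z.reverse <:+: P.dropLast := by
  rcases le_or_gt P.lps.length z.length with hle | hlt
  · have hlps : z.lps = P.lps :=
      lps_eq_lps_of_isSuffix (suffix_of_suffix_length_le P.lps_suffix hP.isSuffix hle) hP.isSuffix
    refine .inl ⟨hP.isPrefix, hlps ▸ P.lps_suffix, ?_⟩
    rw [hlps]
    exact (hw.isPrefix hP.isPrefix).lps_not_isInfix_dropLast hP.ne_nil
  · have hz : z <:+ P.lps := suffix_of_suffix_length_le hP.isSuffix P.lps_suffix hlt.le
    have hzr : z.reverse <+: P.lps := by rwa [← reverse_prefix, reverse_lps] at hz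
    refine .inr (isInfix_dropLast_of_isPrefix hzr ?_ P.lps_suffix)
    rintro h
    rw [← h, length_reverse] at hlt
    exact hlt.false

theorem Rich.isSuffix_or_reverse_isSuffix (hw : Rich w) {z Q P : List A} (hz : z <:+: w)
    (hne : z ≠ []) (hQ : IsFirstOccurrence z.lps w Q) (hP : IsFirstOccurrence z.lpp w P) :
    z <:+ Q ∨ z.reverse <:+ P := by
  obtain ⟨R, hR⟩ := exists_isFirstOccurrence hne hz
  rcases hw.isFirstOccurrence_lps_or_reverse_isInfix hR with hRQ | hzR
  · exact .inl (hRQ.unique hQ ▸ hR.isSuffix)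
  have hRw : R.dropLast <+: w := R.dropLast_prefix.trans hR.isPrefix
  obtain ⟨R', hR'⟩ := exists_isFirstOccurrence (reverse_ne_nil_iff.2 hne) (hzR.trans hRw.isInfix)
  rcases hw.isFirstOccurrence_lps_or_reverse_isInfix hR' with hR'P | hzR'
  · exact .inr ((lps_reverse z ▸ hR'P).unique hP ▸ hR'.isSuffix)
  · rw [reverse_reverse] at hzR'
    refine absurd (hzR'.trans ?_) hR.not_isInfix_dropLast
    exact (R'.dropLast_prefix.trans (hR'.isPrefix_of_isInfix hRw hzR)).isInfix

theorem not_isSuffix_and_reverse_isSuffix {u v Q P : List A}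
    (hQ : IsFirstOccurrence u.lps w Q) (hP : IsFirstOccurrence u.lpp w P) (hu : u.reverse ≠ u)
    (hv : v.reverse ≠ v) (hq : u.lps = v.lps) : ¬ (u <:+ Q ∧ v.reverse <:+ P) := by
  rintro ⟨huQ, hvP⟩
  have hPQ := hP.length_lt_of_isPrefix hQ.isPrefix u.lpp_prefix (lpp_ne_self hu) huQ
  have hv' : v.reverse.reverse ≠ v.reverse := by rwa [reverse_reverse, ne_comm]
  rw [hq, ← lpp_reverse] at hQ
  have hQP := hQ.length_lt_of_isPrefix hP.isPrefix v.reverse.lpp_prefix (lpp_ne_self hv') hvP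
  omega

theorem Rich.eq_of_lpp_eq_of_lps_eq (hw : Rich w) {u v : List A} (hu : u <:+: w)
    (hv : v <:+: w) (hp : u.lpp = v.lpp) (hq : u.lps = v.lps) : u = v := by
  have of_nested : u <:+: v ∨ v <:+: u → u = v := by
    rintro (h | h)
    · exact (hw.isInfix hv).eq_of_isInfix h hp hq
    · exact ((hw.isInfix hu).eq_of_isInfix h hp.symm hq.symm).symm
  by_cases hpu : u.reverse = u
  · exact of_nested (.inl (by rw [← lpp_eq_self hpu, hp]; exact v.lpp_prefix.isInfix))
  by_cases hpv : v.reverse = v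
  · exact of_nested (.inr (by rw [← lpp_eq_self hpv, ← hp]; exact u.lpp_prefix.isInfix))
  have hune : u ≠ [] := by rintro rfl; exact hpu rfl
  have hvne : v ≠ [] := by rintro rfl; exact hpv rfl
  obtain ⟨Q, hQ⟩ := exists_isFirstOccurrence (lps_ne_nil hune) (u.lps_suffix.isInfix.trans hu)
  obtain ⟨P, hP⟩ := exists_isFirstOccurrence (lpp_ne_nil hune) (u.lpp_prefix.isInfix.trans hu)
  rcases hw.isSuffix_or_reverse_isSuffix hu hune hQ hP with huQ | huP <;>
    rcases hw.isSuffix_or_reverse_isSuffix hv hvne (hq ▸ hQ) (hp ▸ hP) with hvQ | hvP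
  · exact of_nested ((suffix_or_suffix_of_suffix huQ hvQ).imp IsSuffix.isInfix IsSuffix.isInfix)
  · exact absurd ⟨huQ, hvP⟩ (not_isSuffix_and_reverse_isSuffix hQ hP hpu hpv hq)
  · exact absurd ⟨hvQ, huP⟩ (not_isSuffix_and_reverse_isSuffix (hq ▸ hQ) (hp ▸ hP) hpv hpu hq.symm)
  · refine of_nested ?_
    simpa only [reverse_infix] using
      (suffix_or_suffix_of_suffix huP hvP).imp IsSuffix.isInfix IsSuffix.isInfix

end Forward

section Backward

theorem exists_isSuffix_no_later_occurrence {s r : List A} (hsr : s <+: r)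
    (hlt : s.length < r.length) :
    ∃ r', r' <:+ r ∧ s <+: r' ∧ s.length < r'.length ∧
      ∀ t, t <:+ r'.tail → s <+: t → t.length ≤ s.length := by
  by_cases h : ∀ t, t <:+ r.tail → s <+: t → t.length ≤ s.length
  · exact ⟨r, suffix_refl r, hsr, hlt, h⟩
  push Not at h
  obtain ⟨t, ht, hst, hlt'⟩ := h
  have : t.length < r.length := by
    have := ht.length_le
    rw [length_tail] at this
    omega
  obtain ⟨r', hr', hr''⟩ := exists_isSuffix_no_later_occurrence hst hlt'
  exact ⟨r', hr'.trans (ht.trans r.tail_suffix), hr''⟩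
termination_by r.length

variable [DecidableEq A]

theorem lpp_eq_of_no_later_occurrence {s r : List A} (hs : s.reverse = s) (hsr : s <+: r)
    (hr : r.reverse ≠ r) (hlater : ∀ t, t <:+ r.tail → s <+: t → t.length ≤ s.length) :
    r.lpp = s := by
  have hle : s.length ≤ r.lpp.length := length_le_length_lpp hsr hs
  have hst : s <+: r.lpp := prefix_of_prefix_length_le hsr r.lpp_prefix hle
  refine (hst.eq_of_length (hle.antisymm ?_)).symm
  by_contra! hlt
  -- a longer palindromic prefix `a ++ s = r.lpp` of `r = r.lpp ++ b` makes `s ++ b` a later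
  -- occurrence of `s`, so `b = []` and `r` would be a palindrome
  obtain ⟨a, ha⟩ := isSuffix_of_isPrefix_of_reverse_eq hst hs r.reverse_lpp
  obtain ⟨b, hb⟩ := r.lpp_prefix
  obtain ⟨c, a, rfl⟩ : ∃ c a', a = c :: a' := exists_cons_of_ne_nil (by
    rintro rfl; simp [← ha] at hlt)
  have hbs := hlater (s ++ b) ⟨a, by rw [← hb, ← ha]; simp⟩ (prefix_append s b)
  rw [length_append] at hbs
  have hb0 : b = [] := length_eq_zero_iff.1 (by omega)
  exact hr (by rw [← hb, hb0, append_nil, reverse_lpp])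

theorem exists_lpp_eq_lps_eq_of_lps_eq {P₁ P₂ : List A} (hP : P₁ <+: P₂) (hne : P₁ ≠ P₂)
    (heq : P₁.lps = P₂.lps) :
    ∃ r, r <:+ P₂ ∧ P₂.lps.length < r.length ∧ r.lpp = P₂.lps ∧ r.lps = P₂.lps := by
  set s := P₂.lps
  obtain ⟨c, rfl⟩ := hP
  obtain ⟨a, ha⟩ := heq ▸ P₁.lps_suffix
  have hc : c ≠ [] := by rintro rfl; simp at hne
  obtain ⟨r, hr, hsr, hlt, hlater⟩ := exists_isSuffix_no_later_occurrence (prefix_append s c)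
    (by simpa using length_pos_iff.2 hc)
  have hrP : r <:+ P₁ ++ c := hr.trans ⟨a, by rw [← ha, append_assoc]⟩
  have hlps : r.lps = s :=
    lps_eq_lps_of_isSuffix (suffix_of_suffix_length_le (lps_suffix _) hrP hlt.le) hrP
  have hr_ne : r.reverse ≠ r := fun h => by
    rw [lps_eq_self h] at hlps
    exact hlt.ne' (congrArg length hlps)
  exact ⟨r, hrP, hlt, lpp_eq_of_no_later_occurrence (reverse_lps _) hsr hr_ne hlater, hlps⟩

theorem rich_of_forall_eq_of_lpp_eq_of_lps_eq {w : List A}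
    (h : ∀ u v : List A, u <:+: w → v <:+: w → u.lpp = v.lpp → u.lps = v.lps → u = v) :
    Rich w := by
  rw [rich_iff_injOn_lps]
  intro P₁ h₁ P₂ h₂ heq
  wlog hle : P₁.length ≤ P₂.length generalizing P₁ P₂
  · exact (this h₂ h₁ heq.symm (le_of_not_ge hle)).symm
  have hP : P₁ <+: P₂ := prefix_of_prefix_length_le h₁ h₂ hle
  by_contra hne
  obtain ⟨r, hr, hlt, hlpp, hlps⟩ := exists_lpp_eq_lps_eq_of_lps_eq hP hne heq
  have hs := P₂.reverse_lps
  have := h r P₂.lps (hr.isInfix.trans h₂.isInfix) (P₂.lps_suffix.isInfix.trans h₂.isInfix)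
    (by rw [hlpp, lpp_eq_self hs]) (by rw [hlps, lps_eq_self hs])
  exact hlt.ne' (congrArg length this)

end Backward

end Words

/-- A finite word `w` is rich if and only if any two factors `u` and `v` of `w` having
the same longest palindromic prefix and the same longest palindromic suffix are
equal. -/
theorem rich_iff_factors_determined_by_pal_prefix_suffix {A : Type*} [DecidableEq A]
    (w : List A) :
    Rich w ↔ ∀ u v p q : List A, u <:+: w → v <:+: w →
      LongestPalPrefix p u → LongestPalPrefix p v →
      LongestPalSuffix q u → LongestPalSuffix q v → u = v := by
  simp only [longestPalPrefix_iff_eq_lpp, longestPalSuffix_iff_eq_lps]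
  constructor
  · rintro hw u v _ _ hu hv rfl hp rfl hq
    exact hw.eq_of_lpp_eq_of_lps_eq hu hv hp hq
  · intro h
    exact rich_of_forall_eq_of_lpp_eq_of_lps_eq fun u v hu hv hp hq =>
      h u v _ _ hu hv rfl hp rfl hq
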